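/- arXiv:1805.06317 — 2 statements merged into one kernel-verified Lean document; each statement's English description precedes it below -/
import Mathlib

section
/- With g₀ = -X²+XY+XZ-Y²-YZ+Z², g₁ = -X²+XY+XZ+Y²-YZ-Z², g₂ = X²+XY+XZ-Y²-YZ-Z², one has the polynomial identity g₀^6 + g₁^6 + g₂^6 + (g₀²+g₁²+g₂²)(g₀⁴+g₁⁴+g₂⁴) - 12 g₀² g₁² g₂² = 2^6 (Y+Z)² (X-Z)² (X-Y)² · F(X,Y,Z), where F = X^6 + Y^6 + Z^6 + (X^2+Y^2+Z^2)(X^4+Y^4+Z^4) - 12 X² Y² Z². -/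
open MvPolynomial

/-- The key polynomial identity showing that the quadratic map
(g₀ : g₁ : g₂) induces an automorphism (of order 5) of the Wiman sextic. -/
theorem wiman_alpha_identity :
    let X0 : MvPolynomial (Fin 3) ℤ := X 0
    let Y0 : MvPolynomial (Fin 3) ℤ := X 1
    let Z0 : MvPolynomial (Fin 3) ℤ := X 2
    let g0 := -X0^2 + X0*Y0 + X0*Z0 - Y0^2 - Y0*Z0 + Z0^2
    let g1 := -X0^2 + X0*Y0 + X0*Z0 + Y0^2 - Y0*Z0 - Z0^2
    let g2 := X0^2 + X0*Y0 + X0*Z0 - Y0^2 - Y0*Z0 - Z0^2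
    let F := X0^6 + Y0^6 + Z0^6 + (X0^2 + Y0^2 + Z0^2) * (X0^4 + Y0^4 + Z0^4)
      - 12 * X0^2 * Y0^2 * Z0^2
    g0^6 + g1^6 + g2^6 + (g0^2 + g1^2 + g2^2) * (g0^4 + g1^4 + g2^4)
      - 12 * g0^2 * g1^2 * g2^2
      = 2^6 * (Y0 + Z0)^2 * (X0 - Z0)^2 * (X0 - Y0)^2 * F := by
  intro X0 Y0 Z0 g0 g1 g2 F
  simp only [g0,g1,g2,F]
  ring
end

section
/- A group of order 18 cannot contain exactly 7 involutions (elements of order 2). -/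
/-- A group of order 18 cannot contain exactly 7 involutions. -/
theorem no_seven_involutions_in_group_of_order_18 (G : Type*) [Group G]
    (h : Nat.card G = 18) :
    Nat.card {g : G // orderOf g = 2} ≠ 7 := by
  have hfin : Finite G := Nat.finite_of_card_ne_zero (by omega)
  have hp : Fact (Nat.Prime 2) := ⟨Nat.prime_two⟩
  have hfact : (Nat.card G).factorization 2 = 1 := by
    rw [h, show (18:ℕ) = 2 * 9 by norm_num, Nat.factorization_mul (by norm_num) (by norm_num)]
    rw [Finsupp.add_apply, Nat.Prime.factorization_self Nat.prime_two,
      Nat.factorization_eq_zero_of_not_dvd (by norm_num)]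
  -- bijection between involutions and Sylow 2-subgroups
  have key : Nat.card {g : G // orderOf g = 2} = Nat.card (Sylow 2 G) := by
    apply Nat.card_eq_of_bijective
      (fun g => Sylow.ofCard (Subgroup.zpowers g.1)
        (by rw [Nat.card_zpowers, g.2, hfact, pow_one]))
    constructor
    · rintro ⟨a, ha⟩ ⟨b, hb⟩ hab
      have : Subgroup.zpowers a = Subgroup.zpowers b := by
        have := congrArg (fun P : Sylow 2 G => (P : Subgroup G)) hab
        simpa using this
      have hb_mem : b ∈ Subgroup.zpowers a := this ▸ Subgroup.mem_zpowers b
      have hcard : Nat.card (Subgroup.zpowers a) = 2 := by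
        rw [Nat.card_zpowers, ha]
      -- zpowers a has order 2, so b = a or b = 1
      have hb1 : b ≠ 1 := by
        intro hb1; rw [hb1, orderOf_one] at hb; omega
      have ha2 : a ^ 2 = 1 := by rw [← ha]; exact pow_orderOf_eq_one a
      obtain ⟨k, hk⟩ := hb_mem
      simp only at hk
      have hk2 : a ^ (k % 2) = b := by
        have h2 := zpow_mod_orderOf a k
        rw [ha] at h2
        norm_cast at h2
        rw [h2, hk]
      have : k % 2 = 0 ∨ k % 2 = 1 := by omega
      rcases this with hm | hm
      · rw [hm, zpow_zero] at hk2; exact absurd hk2.symm hb1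
      · rw [hm, zpow_one] at hk2; ext; exact hk2
    · intro P
      have hPcard : Nat.card (P : Subgroup G) = 2 := by
        rw [Sylow.card_eq_multiplicity, hfact, pow_one]
      have : IsCyclic (P : Subgroup G) := isCyclic_of_prime_card (p := 2) hPcard
      obtain ⟨g, hg⟩ := IsCyclic.exists_generator (α := (P : Subgroup G))
      have hgord : orderOf (g : G) = 2 := by
        have : orderOf g = 2 := by
          rw [orderOf_eq_card_of_forall_mem_zpowers hg, hPcard]
        exact (orderOf_injective (P : Subgroup G).subtype Subtype.coe_injective g).trans this
      refine ⟨⟨g, hgord⟩, ?_⟩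
      apply Sylow.ext
      rw [Sylow.coe_ofCard]
      ext x
      constructor
      · rintro ⟨k, rfl⟩; exact Subgroup.zpow_mem _ g.2 k
      · intro hx
        obtain ⟨k, hk⟩ := hg ⟨x, hx⟩
        exact ⟨k, by simpa [SubgroupClass.coe_zpow] using congrArg Subtype.val hk⟩
  intro h7
  rw [key] at h7
  have := Sylow.card_dvd_index (Classical.arbitrary (Sylow 2 G))
  have hidx : (Classical.arbitrary (Sylow 2 G) : Subgroup G).index = 9 := by
    have hc : Nat.card ((Classical.arbitrary (Sylow 2 G) : Subgroup G)) = 2 := by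
      rw [Sylow.card_eq_multiplicity, hfact, pow_one]
    have := Subgroup.card_mul_index ((Classical.arbitrary (Sylow 2 G) : Subgroup G))
    rw [hc, h] at this; omega
  rw [h7, hidx] at this
  omega
end
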